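/- In the SAT-reduction arena A_φ, if the memoryless strategy of player P corresponds to an assignment a satisfying all clauses of φ, then every play consistent with that strategy (against any strategy of player F) reaches the target set R = {(v, (C_m, ⊤))}. -/

import Mathlib

/-- Public components of the arena `A_φ`: `none` is the state `∞`, `some (j, a)` is `x_j^a`. -/
abbrev SatPub (n : ℕ) := Option (Fin (n + 1) × Bool)

/-- States of the arena `A_φ`: a public component together with the private component
`(C_k, α)` recording the current clause and whether it is already satisfied. -/
abbrev SatSta (n m : ℕ) := SatPub n × (Fin (m + 1) × Bool)

/-- Transition function of the arena `A_φ`: the players sequentially evaluate the clauses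
under the assignment played by `P`; a falsified clause leads to the losing sink
`(C_m, ⊥)`, and the states of the last clause at the final variable are sinks. -/
def satDelta (n m : ℕ) (cl : Fin (m + 1) → Finset (Fin (n + 1) × Bool)) :
    SatSta n m → Bool → Bool → SatSta n m := fun v a _b =>
  match v with
  | (none, (k, _)) =>
      (some (0, a), (k, decide (((0 : Fin (n + 1)), a) ∈ cl k)))
  | (some (j, c), (k, α)) =>
      if h : (j : ℕ) < n then
        (some (⟨(j : ℕ) + 1, by omega⟩, a),
          (k, α || decide (((⟨(j : ℕ) + 1, by omega⟩ : Fin (n + 1)), a) ∈ cl k)))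
      else
        if k = Fin.last m then (some (j, c), (k, α))
        else if α then (none, (k + 1, false))
        else (some (j, a), (Fin.last m, false))

/-- The play induced by a memoryless strategy `σ` of player `P` and a strategy `τ` of
player `F` (represented by its sequence of moves). -/
def satPlay (n m : ℕ) (cl : Fin (m + 1) → Finset (Fin (n + 1) × Bool))
    (σ : SatPub n → Bool) (τ : ℕ → Bool) : ℕ → SatSta n m
  | 0 => (none, (0, false))
  | i + 1 =>
      satDelta n m cl (satPlay n m cl σ τ i)
        (σ (satPlay n m cl σ τ i).1) (τ i)

/-- The memoryless strategy of player `P` corresponding to the assignment `a`. -/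
def stratOf (n : ℕ) (a : Fin (n + 1) → Bool) : SatPub n → Bool
  | none => a 0
  | some (j, _) => if h : (j : ℕ) < n then a ⟨(j : ℕ) + 1, by omega⟩ else true

/-!
Playing the assignment `a`, player `P` makes the scan of clause `C_k` that starts at
`(∞, (C_k, ⊥))` visit `x_0^{a 0}, …, x_n^{a n}`, and after `x_j` the flag records whether some
literal `(l, a l)` with `l ≤ j` lies in `C_k`; the moves of `F` play no role. Since `a` satisfies
`C_k`, the flag is `⊤` at `x_n`, so the play either stops in `(C_m, ⊤)` or restarts at
`(∞, (C_{k+1}, ⊥))`.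
-/

section

variable {n m : ℕ} (cl : Fin (m + 1) → Finset (Fin (n + 1) × Bool))

lemma satDelta_none (k : Fin (m + 1)) (α b f : Bool) :
    satDelta n m cl (none, (k, α)) b f = (some (0, b), (k, decide ((0, b) ∈ cl k))) :=
  rfl

lemma satDelta_castSucc (j : Fin n) (c : Bool) (k : Fin (m + 1)) (α b f : Bool) :
    satDelta n m cl (some (j.castSucc, c), (k, α)) b f =
      (some (j.succ, b), (k, α || decide ((j.succ, b) ∈ cl k))) :=
  dif_pos j.is_lt

lemma satDelta_last_of_ne_last (c : Bool) {k : Fin (m + 1)} (hk : k ≠ Fin.last m) (b f : Bool) :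
    satDelta n m cl (some (Fin.last n, c), (k, true)) b f = (none, (k + 1, false)) := by
  simp [satDelta, hk]

lemma stratOf_castSucc (a : Fin (n + 1) → Bool) (j : Fin n) (c : Bool) :
    stratOf n a (some (j.castSucc, c)) = a j.succ :=
  dif_pos j.is_lt

lemma satPlay_succ (σ : SatPub n → Bool) (τ : ℕ → Bool) (i : ℕ) :
    satPlay n m cl σ τ (i + 1) =
      satDelta n m cl (satPlay n m cl σ τ i) (σ (satPlay n m cl σ τ i).1) (τ i) :=
  rfl

variable {cl}

lemma exists_le_succ_mem_iff (k : Fin (m + 1)) (a : Fin (n + 1) → Bool) (j : Fin n) :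
    (∃ l ≤ j.succ, (l, a l) ∈ cl k) ↔
      (∃ l ≤ j.castSucc, (l, a l) ∈ cl k) ∨ (j.succ, a j.succ) ∈ cl k := by
  simp only [le_iff_lt_or_eq, ← Fin.le_castSucc_iff, or_and_right, exists_or, exists_eq_left]

theorem satPlay_scan (a : Fin (n + 1) → Bool) (τ : ℕ → Bool) {i : ℕ} {k : Fin (m + 1)}
    (hi : satPlay n m cl (stratOf n a) τ i = (none, (k, false))) (j : Fin (n + 1)) :
    satPlay n m cl (stratOf n a) τ (i + j + 1) =
      (some (j, a j), (k, decide (∃ l ≤ j, (l, a l) ∈ cl k))) := by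
  induction j using Fin.induction with
  | zero =>
    rw [Fin.val_zero, add_zero, satPlay_succ, hi, satDelta_none]
    simp only [Fin.le_zero_iff, exists_eq_left]
    rfl
  | succ j ih =>
    rw [Fin.val_succ, ← add_assoc, satPlay_succ, ← Fin.val_castSucc, ih, stratOf_castSucc,
      satDelta_castSucc]
    simp only [exists_le_succ_mem_iff, Bool.decide_or]

theorem satPlay_clause_satisfied (a : Fin (n + 1) → Bool) (τ : ℕ → Bool) {i : ℕ}
    {k : Fin (m + 1)} (hk : ∃ j, (j, a j) ∈ cl k)
    (hi : satPlay n m cl (stratOf n a) τ i = (none, (k, false))) :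
    satPlay n m cl (stratOf n a) τ (i + n + 1) =
      (some (Fin.last n, a (Fin.last n)), (k, true)) := by
  obtain ⟨j, hj⟩ := hk
  have hscan := satPlay_scan a τ hi (Fin.last n)
  rwa [Fin.val_last, decide_eq_true ⟨j, Fin.le_last j, hj⟩] at hscan

theorem exists_satPlay_eq_clause_start (a : Fin (n + 1) → Bool)
    (hsat : ∀ k, ∃ j, (j, a j) ∈ cl k) (τ : ℕ → Bool) (k : Fin (m + 1)) :
    ∃ i, satPlay n m cl (stratOf n a) τ i = (none, (k, false)) := by
  induction k using Fin.induction with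
  | zero => exact ⟨0, rfl⟩
  | succ k ih =>
    obtain ⟨i, hi⟩ := ih
    refine ⟨i + n + 1 + 1, ?_⟩
    rw [satPlay_succ, satPlay_clause_satisfied a τ (hsat _) hi,
      satDelta_last_of_ne_last cl _ k.castSucc_lt_last.ne, Fin.coeSucc_eq_succ]

end

/-- If the memoryless strategy of `P` corresponds to an assignment satisfying all clauses,
then every play consistent with it reaches the target set `R = {(v, (C_m, ⊤))}`. -/
theorem satisfying_assignment_wins_reachability (n m : ℕ)
    (cl : Fin (m + 1) → Finset (Fin (n + 1) × Bool)) (a : Fin (n + 1) → Bool)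
    (hsat : ∀ k, ∃ j, (j, a j) ∈ cl k) :
    ∀ τ : ℕ → Bool, ∃ i,
      (satPlay n m cl (stratOf n a) τ i).2 = (Fin.last m, true) := by
  intro τ
  obtain ⟨i, hi⟩ := exists_satPlay_eq_clause_start a hsat τ (Fin.last m)
  exact ⟨i + n + 1, by rw [satPlay_clause_satisfied a τ (hsat _) hi]⟩
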